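/- arXiv:2602.09176 — 5 statements merged into one kernel-verified Lean document; each statement's English description precedes it below -/
import Mathlib

section
/- Let X and Y be independent random variables with values in measurable spaces 𝒳 and 𝒴, let 𝖽 : 𝒳 × 𝒴 → [0,∞) be jointly measurable with E[𝖽(X,Y)²] < ∞, let λ ≥ 0 and c ≥ 0, and define ȷ(x) = −λ c − ln E[exp(−λ 𝖽(x,Y))] (expectation over Y only). Then Var[ȷ(X)] ≤ 2λ² ( E[𝖽(X,Y)²] + c² ). (This is the per-coordinate estimate underlying the paper's Lemma 3, which shows that the source dispersion V_n(d) = (1/n)Σ_i Var[ȷ(X_i,d_i)] is uniformly bounded above under a uniform second-moment condition on the distortion.) -/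
/-!
Writing `ȷ(x) = -λc - Λₓ(-λ)`, where `Λₓ` is the cumulant generating function of `𝖽(x, Y)`,
the constant `-λc` does not affect the variance, so `Var[ȷ(X)] ≤ E[Λ_X(-λ)²]`.
For a nonnegative variable and `t ≤ 0` one has `t · E[𝖽] ≤ Λ(t) ≤ 0` (Jensen, and `exp(t𝖽) ≤ 1`),
hence `Λₓ(-λ)² ≤ λ² E[𝖽(x,Y)]² ≤ λ² E[𝖽(x,Y)²]`; integrating over `x` (Fubini) gives
`Var[ȷ(X)] ≤ λ² E[𝖽(X,Y)²]`.
-/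

open MeasureTheory ProbabilityTheory

namespace MeasureTheory

lemma memLp_two_of_integrable_sq_of_nonneg {α : Type*} {m : MeasurableSpace α} {μ : Measure α}
    {f : α → ℝ} (hf : Integrable (fun x ↦ f x ^ 2) μ) (hf0 : 0 ≤ᵐ[μ] f) : MemLp f 2 μ := by
  have hmeas : AEStronglyMeasurable f μ := by
    refine (hf.aemeasurable.sqrt.congr ?_).aestronglyMeasurable
    filter_upwards [hf0] with x hx
    exact Real.sqrt_sq hx
  exact (memLp_two_iff_integrable_sq hmeas).2 hf

end MeasureTheory

namespace ProbabilityTheory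

section

variable {Ω : Type*} {mΩ : MeasurableSpace Ω} {μ : Measure Ω} [IsProbabilityMeasure μ]
  {X : Ω → ℝ} {t : ℝ}

lemma sq_integral_le_integral_sq (hX : MemLp X 2 μ) : μ[X] ^ 2 ≤ μ[X ^ 2] := by
  simpa [variance_eq_sub hX] using variance_nonneg X μ

lemma cgf_nonpos_of_nonneg_of_nonpos (hX : 0 ≤ᵐ[μ] X) (ht : t ≤ 0) : cgf X μ t ≤ 0 := by
  have hmgf : mgf X μ t ≤ 1 := by
    simpa using mgf_anti_of_nonpos (Y := X) hX ht (by simp)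
  exact Real.log_nonpos mgf_nonneg hmgf

lemma mul_integral_le_cgf (hX : Integrable X μ)
    (hexp : Integrable (fun ω ↦ Real.exp (t * X ω)) μ) : t * μ[X] ≤ cgf X μ t := by
  rw [cgf, Real.le_log_iff_exp_le (mgf_pos hexp), ← integral_const_mul]
  exact convexOn_exp.map_integral_le Real.continuous_exp.continuousOn isClosed_univ
    (.of_forall fun _ ↦ Set.mem_univ _) (hX.const_mul t) hexp

lemma sq_cgf_le_of_nonneg_of_nonpos (hX : MemLp X 2 μ) (hX0 : 0 ≤ᵐ[μ] X) (ht : t ≤ 0) :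
    cgf X μ t ^ 2 ≤ t ^ 2 * μ[X ^ 2] := by
  have hexp : Integrable (fun ω ↦ Real.exp (t * X ω)) μ := by
    refine .of_mem_Icc 0 1 (hX.aestronglyMeasurable.aemeasurable.const_mul t).exp ?_
    filter_upwards [hX0] with ω hω
    exact ⟨(Real.exp_pos _).le, Real.exp_le_one_iff.2 (mul_nonpos_of_nonpos_of_nonneg ht hω)⟩
  have hlower := mul_integral_le_cgf (hX.integrable one_le_two) hexp
  have hupper := cgf_nonpos_of_nonneg_of_nonpos hX0 ht
  calc cgf X μ t ^ 2 ≤ (t * μ[X]) ^ 2 := by nlinarith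
    _ = t ^ 2 * μ[X] ^ 2 := by ring
    _ ≤ t ^ 2 * μ[X ^ 2] := by gcongr; exact sq_integral_le_integral_sq hX

end

section Prod

open Function

variable {α β : Type*} [MeasurableSpace α] [MeasurableSpace β] {μ : Measure α} {ν : Measure β}
  [IsProbabilityMeasure ν] {f : α → β → ℝ} {t : ℝ}

lemma aestronglyMeasurable_cgf_prod_right (hf : AEStronglyMeasurable (uncurry f) (μ.prod ν)) :
    AEStronglyMeasurable (fun x ↦ cgf (f x) ν t) μ := by
  have hmgf : AEStronglyMeasurable (fun x ↦ mgf (f x) ν t) μ :=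
    (hf.aemeasurable.const_mul t).exp.aestronglyMeasurable.integral_prod_right'
  exact hmgf.aemeasurable.log.aestronglyMeasurable

lemma integral_sq_cgf_le_of_nonneg_of_nonpos [SFinite μ] (hf : MemLp (uncurry f) 2 (μ.prod ν))
    (hf0 : 0 ≤ᵐ[μ.prod ν] uncurry f) (ht : t ≤ 0) :
    ∫ x, cgf (f x) ν t ^ 2 ∂μ ≤ t ^ 2 * ∫ p, f p.1 p.2 ^ 2 ∂(μ.prod ν) := by
  have hsq : Integrable (fun p : α × β ↦ f p.1 p.2 ^ 2) (μ.prod ν) := hf.integrable_sq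
  have hsection : ∀ᵐ x ∂μ, cgf (f x) ν t ^ 2 ≤ t ^ 2 * ∫ y, f x y ^ 2 ∂ν := by
    filter_upwards [hf.aestronglyMeasurable.prodMk_left, hsq.prod_right_ae,
      Measure.ae_ae_of_ae_prod hf0] with x hmeas hint hnonneg
    exact sq_cgf_le_of_nonneg_of_nonpos ((memLp_two_iff_integrable_sq hmeas).2 hint) hnonneg ht
  calc ∫ x, cgf (f x) ν t ^ 2 ∂μ ≤ ∫ x, t ^ 2 * ∫ y, f x y ^ 2 ∂ν ∂μ :=
        integral_mono_of_nonneg (.of_forall fun _ ↦ sq_nonneg _)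
          (hsq.integral_prod_left.const_mul _) hsection
    _ = t ^ 2 * ∫ p, f p.1 p.2 ^ 2 ∂(μ.prod ν) := by
        rw [integral_const_mul, integral_prod _ hsq]

end Prod

end ProbabilityTheory

theorem variance_tilted_information_le_general
    {α β : Type*} [MeasurableSpace α] [MeasurableSpace β]
    (μ : Measure α) (ν : Measure β) [IsProbabilityMeasure μ] [IsProbabilityMeasure ν]
    (dist : α → β → ℝ)
    (hnn : ∀ x y, 0 ≤ dist x y)
    (hint : Integrable (fun p : α × β => (dist p.1 p.2) ^ 2) (μ.prod ν))
    (lam c : ℝ) (hlam : 0 ≤ lam)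
    (j : α → ℝ)
    (hj : ∀ x, j x = -lam * c - Real.log (∫ y, Real.exp (-lam * dist x y) ∂ν)) :
    variance j μ ≤
      2 * lam ^ 2 * ((∫ p : α × β, (dist p.1 p.2) ^ 2 ∂(μ.prod ν)) + c ^ 2) := by
  set h : α → ℝ := fun x ↦ -cgf (dist x) ν (-lam)
  have hj_eq : j = fun x ↦ h x + -lam * c := by
    funext x
    rw [hj x]
    simp only [h, cgf, mgf]
    ring
  have hdist0 : 0 ≤ᵐ[μ.prod ν] Function.uncurry dist := .of_forall fun p ↦ hnn p.1 p.2
  have hdist : MemLp (Function.uncurry dist) 2 (μ.prod ν) :=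
    memLp_two_of_integrable_sq_of_nonneg hint hdist0
  have hh : AEStronglyMeasurable h μ :=
    (aestronglyMeasurable_cgf_prod_right hdist.aestronglyMeasurable).neg
  have hsq_nonneg : 0 ≤ ∫ p : α × β, (dist p.1 p.2) ^ 2 ∂(μ.prod ν) :=
    integral_nonneg fun _ ↦ sq_nonneg _
  calc variance j μ = variance h μ := by rw [hj_eq, variance_add_const hh]
    _ ≤ ∫ x, h x ^ 2 ∂μ := variance_le_expectation_sq hh
    _ ≤ lam ^ 2 * ∫ p : α × β, (dist p.1 p.2) ^ 2 ∂(μ.prod ν) := by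
        simpa [h] using integral_sq_cgf_le_of_nonneg_of_nonpos hdist hdist0 (neg_nonpos.2 hlam)
    _ ≤ 2 * lam ^ 2 * ((∫ p : α × β, (dist p.1 p.2) ^ 2 ∂(μ.prod ν)) + c ^ 2) := by
        nlinarith [sq_nonneg lam, sq_nonneg c]

/-- Per-coordinate variance bound for the d-tilted information (Lemma 3 core):
if `ȷ(x) = -λc - ln E[exp(-λ d(x,Y))]`, then `Var[ȷ(X)] ≤ 2λ²(E[d(X,Y)²] + c²)`. -/
theorem variance_tilted_information_le
    {α β : Type*} [MeasurableSpace α] [MeasurableSpace β]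
    (μ : Measure α) (ν : Measure β) [IsProbabilityMeasure μ] [IsProbabilityMeasure ν]
    (dist : α → β → ℝ) (hmeas : Measurable (Function.uncurry dist))
    (hnn : ∀ x y, 0 ≤ dist x y)
    (hint : Integrable (fun p : α × β => (dist p.1 p.2) ^ 2) (μ.prod ν))
    (lam c : ℝ) (hlam : 0 ≤ lam) (hc : 0 ≤ c)
    (j : α → ℝ)
    (hj : ∀ x, j x = -lam * c - Real.log (∫ y, Real.exp (-lam * dist x y) ∂ν)) :
    variance j μ ≤
      2 * lam ^ 2 * ((∫ p : α × β, (dist p.1 p.2) ^ 2 ∂(μ.prod ν)) + c ^ 2) :=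
  variance_tilted_information_le_general μ ν dist hnn hint lam c hlam j hj
end

section
/- Let 𝒳 and 𝒴 be standard Borel spaces, P_X a probability measure on 𝒳, 𝖽 : 𝒳 × 𝒴 → [0,∞] jointly measurable, d ≥ 0, and M a positive integer. For any probability measure P_Y on 𝒴 there exist measurable maps f : 𝒳 → {1,…,M} and g : {1,…,M} → 𝒴 such that P_X( { x : 𝖽(x, g(f(x))) > d } ) ≤ ∫ exp( −M · P_Y(𝓑(x,d)) ) dP_X(x), where 𝓑(x,d) = { y ∈ 𝒴 : 𝖽(x,y) ≤ d } is the distortion d-ball centered at x. (Random-coding achievability bound; Lemma 4 of the paper, Corollary 11 of Kostina–Verdú.) -/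
/-!
Draw the codebook `c : Fin M → β` with i.i.d. `ν` entries. By Tonelli, the expected `μ`-measure of
the set of sources with no codeword within distortion `d` is `∫ (1 - ν 𝓑(x,d)) ^ M dμ`, which is at
most `∫ exp (-M ν 𝓑(x,d)) dμ` because `1 - t ≤ exp (-t)`, and some codebook does no worse than the
average. An encoder sending each source to a codeword within distortion `d`, whenever there is one,
has its excess-distortion event inside that set.
-/

open MeasureTheory
open scoped ENNReal

theorem exists_measurable_selector_of_finite {α ι : Type*} [MeasurableSpace α] [MeasurableSpace ι]
    [Finite ι] [Nonempty ι] {p : α → ι → Prop} (hp : ∀ i, MeasurableSet {x | p x i}) :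
    ∃ f : α → ι, Measurable f ∧ ∀ x i, p x i → p x (f x) := by
  classical
  let pick : (ι → Bool) → ι := fun b => if h : ∃ i, b i then h.choose else Classical.arbitrary ι
  have hpattern : Measurable fun x i => decide (p x i) :=
    measurable_pi_lambda _ fun i => measurable_to_bool (by simpa [Set.preimage] using hp i)
  refine ⟨fun x => pick fun i => decide (p x i), (measurable_of_countable pick).comp hpattern,
    fun x i hi => ?_⟩
  have h : ∃ j, decide (p x j) = true := ⟨i, by simpa using hi⟩
  simpa only [pick, dif_pos h, decide_eq_true_eq] using h.choose_spec

section RandomCoding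

variable {α β ι : Type*} [MeasurableSpace α] [MeasurableSpace β] [Fintype ι]
  {μ : Measure α} {ν : Measure β} {S : Set (α × β)}

theorem measurableSet_setOf_forall_mem_of_measurableSet (hS : MeasurableSet S) :
    MeasurableSet {q : (ι → β) × α | ∀ i, (q.2, q.1 i) ∈ S} := by
  simp only [Set.ofPred_forall]
  exact MeasurableSet.iInter fun i =>
    hS.preimage (measurable_snd.prodMk ((measurable_pi_apply i).comp measurable_fst))

theorem lintegral_measure_setOf_forall_mem_eq [SFinite μ] [SigmaFinite ν]
    (hS : MeasurableSet S) :
    ∫⁻ c, μ {x | ∀ i, (x, c i) ∈ S} ∂(Measure.pi fun _ : ι => ν) =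
      ∫⁻ x, ν (Prod.mk x ⁻¹' S) ^ Fintype.card ι ∂μ := by
  have hT := measurableSet_setOf_forall_mem_of_measurableSet (ι := ι) hS
  refine (Measure.prod_apply hT).symm.trans ((Measure.prod_apply_symm hT).trans ?_)
  congr 1 with x
  have : (fun c : ι → β => (c, x)) ⁻¹' {q | ∀ i, (q.2, q.1 i) ∈ S} =
      Set.univ.pi fun _ => Prod.mk x ⁻¹' S := by
    ext c; simp
  rw [this, Measure.pi_pi, Finset.prod_const, Finset.card_univ]

theorem exists_measure_setOf_forall_mem_le [SFinite μ] [IsProbabilityMeasure ν]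
    (hS : MeasurableSet S) :
    ∃ c : ι → β, μ {x | ∀ i, (x, c i) ∈ S} ≤ ∫⁻ x, ν (Prod.mk x ⁻¹' S) ^ Fintype.card ι ∂μ := by
  rw [← lintegral_measure_setOf_forall_mem_eq hS]
  exact exists_le_lintegral (measurable_measure_prodMk_left
    (measurableSet_setOf_forall_mem_of_measurableSet hS)).aemeasurable

end RandomCoding

theorem ENNReal.one_sub_pow_le_ofReal_exp {p : ℝ≥0∞} (hp : p ≤ 1) (n : ℕ) :
    (1 - p) ^ n ≤ ENNReal.ofReal (Real.exp (-n * p.toReal)) := by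
  have hp' : p ≠ ∞ := ne_top_of_le_ne_top ENNReal.one_ne_top hp
  have ht : p.toReal ≤ 1 := ENNReal.toReal_le_of_le_ofReal zero_le_one (by simpa using hp)
  have h1 : 1 - p = ENNReal.ofReal (1 - p.toReal) := by
    rw [ENNReal.ofReal_sub _ ENNReal.toReal_nonneg, ENNReal.ofReal_one, ENNReal.ofReal_toReal hp']
  rw [h1, ← ENNReal.ofReal_pow (by linarith)]
  refine ENNReal.ofReal_le_ofReal ?_
  calc (1 - p.toReal) ^ n ≤ Real.exp (-p.toReal) ^ n :=
        pow_le_pow_left₀ (by linarith) (Real.one_sub_le_exp_neg _) n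
    _ = Real.exp (-n * p.toReal) := by rw [← Real.exp_nat_mul]; ring_nf

theorem random_coding_bound_general
    {α β : Type*} [MeasurableSpace α] [MeasurableSpace β]
    (μ : Measure α) [IsProbabilityMeasure μ]
    (dist : α → β → ℝ≥0∞) (hmeas : Measurable (Function.uncurry dist))
    (d : ℝ≥0∞) (M : ℕ) (hM : 0 < M)
    (ν : Measure β) [IsProbabilityMeasure ν] :
    ∃ (f : α → Fin M) (g : Fin M → β), Measurable f ∧ Measurable g ∧
      (μ {x | d < dist x (g (f x))}).toReal ≤
        ∫ x, Real.exp (-(M : ℝ) * (ν {y | dist x y ≤ d}).toReal) ∂μ := by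
  have : NeZero M := ⟨hM.ne'⟩
  set B : Set (α × β) := {q | dist q.1 q.2 ≤ d}
  have hB : MeasurableSet B := hmeas measurableSet_Iic
  obtain ⟨c, hc⟩ := exists_measure_setOf_forall_mem_le (ι := Fin M) (μ := μ) (ν := ν) hB.compl
  obtain ⟨f, hf, hfc⟩ := exists_measurable_selector_of_finite (p := fun x i => (x, c i) ∈ B)
    fun i => hB.preimage (measurable_id.prodMk measurable_const)
  have hint : Integrable (fun x => Real.exp (-(M : ℝ) * (ν (Prod.mk x ⁻¹' B)).toReal)) μ := by
    refine .of_bound (Real.measurable_exp.comp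
      ((measurable_measure_prodMk_left hB).ennreal_toReal.const_mul _)).aestronglyMeasurable 1
      (ae_of_all _ fun x => ?_)
    rw [Real.norm_of_nonneg (Real.exp_pos _).le, Real.exp_le_one_iff, neg_mul, neg_nonpos]
    positivity
  refine ⟨f, c, hf, measurable_of_countable c,
    ENNReal.toReal_le_of_le_ofReal (integral_nonneg fun _ => (Real.exp_pos _).le) ?_⟩
  calc μ {x | d < dist x (c (f x))}
      ≤ μ {x | ∀ i, (x, c i) ∈ Bᶜ} :=
        measure_mono fun x (hx : d < _) i hi => not_lt.2 (hfc x i hi) hx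
    _ ≤ ∫⁻ x, ν (Prod.mk x ⁻¹' Bᶜ) ^ M ∂μ := by simpa using hc
    _ ≤ ∫⁻ x, ENNReal.ofReal (Real.exp (-(M : ℝ) * (ν (Prod.mk x ⁻¹' B)).toReal)) ∂μ :=
        lintegral_mono fun x => by
          rw [Set.preimage_compl, prob_compl_eq_one_sub (measurable_prodMk_left hB)]
          exact ENNReal.one_sub_pow_le_ofReal_exp prob_le_one M
    _ = _ :=
        (ofReal_integral_eq_lintegral_ofReal hint (ae_of_all _ fun _ => (Real.exp_pos _).le)).symm

/-- Random-coding achievability bound (Lemma 4; Kostina–Verdú Cor. 11): for any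
reproduction distribution `P_Y` there is an `(M,d)` code whose excess-distortion
probability is at most `E_X[exp(−M · P_Y(B(X,d)))]`. -/
theorem random_coding_bound
    {α β : Type*} [MeasurableSpace α] [MeasurableSpace β]
    [StandardBorelSpace α] [StandardBorelSpace β]
    (μ : Measure α) [IsProbabilityMeasure μ]
    (dist : α → β → ℝ≥0∞) (hmeas : Measurable (Function.uncurry dist))
    (d : ℝ≥0∞) (M : ℕ) (hM : 0 < M)
    (ν : Measure β) [IsProbabilityMeasure ν] :
    ∃ (f : α → Fin M) (g : Fin M → β), Measurable f ∧ Measurable g ∧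
      (μ {x | d < dist x (g (f x))}).toReal ≤
        ∫ x, Real.exp (-(M : ℝ) * (ν {y | dist x y ≤ d}).toReal) ∂μ :=
  random_coding_bound_general μ dist hmeas d M hM ν
end

section
/- Let σ² > 0 and θ > 0, set ν = max(0, σ² − θ), λ = 1/(2θ), and c = min(θ, σ²), and let V ~ N(0, ν) (the point mass at 0 when ν = 0). Then for every u ∈ ℝ, −λ c − ln E[ exp( −λ (u − V)² ) ] = ( min(θ, σ²) / (2θ) ) · ( u²/σ² − 1 ) + max( 0, (1/2) ln(σ²/θ) ). (Equation (30) of the paper: closed form for the per-letter d-tilted information of a Gaussian source component with variance σ² under squared-error distortion at water level θ.) -/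
/-!
Completing the square, the Gaussian smoothing of `exp (-a (u - x)²)` against `N(μ, v)` is again
a Gaussian in `u`, with prefactor `(1 + 2av)^(-1/2)` and `a` replaced by `a / (1 + 2av)`.
At water level `θ` with `a = 1/(2θ)` and `v = max 0 (s - θ)` one has `1 + 2av = max θ s / θ`,
and the closed form follows from `min θ s * max θ s = θ * s`.
-/

open MeasureTheory ProbabilityTheory Real NNReal

theorem integral_exp_neg_mul_sub_sq_gaussianReal (μ : ℝ) (v : ℝ≥0) {a : ℝ}
    (ha : 0 < 1 + 2 * a * v) (u : ℝ) :
    ∫ x, exp (-a * (u - x) ^ 2) ∂gaussianReal μ v =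
      (√(1 + 2 * a * v))⁻¹ * exp (-a * (u - μ) ^ 2 / (1 + 2 * a * v)) := by
  rcases eq_or_ne v 0 with rfl | hv
  · simp [gaussianReal_zero_var]
  set k := 1 + 2 * a * v
  have hv₀ : (0 : ℝ) < v := by positivity
  have hsq : ∀ x, gaussianPDFReal μ v x • exp (-a * (u - x) ^ 2) =
      ((√(2 * π * v))⁻¹ * exp (-a * (u - μ) ^ 2 / k)) *
        exp (-(k / (2 * v)) * (x - (μ + 2 * a * v * u) / k) ^ 2) := by
    intro x
    rw [gaussianPDFReal, smul_eq_mul, mul_assoc, mul_assoc (_)⁻¹, ← exp_add, ← exp_add]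
    congr 2
    field_simp
    ring
  rw [integral_gaussianReal_eq_integral_smul hv, funext hsq, integral_const_mul,
    integral_sub_right_eq_self (fun x ↦ exp (-(k / (2 * v)) * x ^ 2)), integral_gaussian]
  have hπ : π / (k / (2 * v)) = (2 * π * v) / k := by field_simp
  rw [hπ, sqrt_div' _ ha.le]
  field_simp

theorem max_zero_half_log_div {s θ : ℝ} (hs : 0 < s) (hθ : 0 < θ) :
    max 0 ((1 / 2) * log (s / θ)) = (1 / 2) * log (max θ s / θ) := by
  rcases le_total s θ with h | h
  · rw [max_eq_left h, div_self hθ.ne', log_one, mul_zero, max_eq_left_iff]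
    have := log_nonpos (by positivity) ((div_le_one hθ).2 h)
    linarith
  · rw [max_eq_right h, max_eq_right_iff]
    have := log_nonneg ((one_le_div hθ).2 h)
    positivity

/-- Eq. (30): closed form for the per-letter d-tilted information of a Gaussian
source component with variance `s = σ² > 0` under squared error at water level
`θ > 0`, with `ν = max(0, s−θ)`, `λ = 1/(2θ)`, `c = min(θ,s)`, `V ~ N(0,ν)`. -/
theorem gaussian_d_tilted_information
    (s θ : ℝ) (hs : 0 < s) (hθ : 0 < θ)
    (ν lam c : ℝ) (hν : ν = max 0 (s - θ)) (hlam : lam = 1 / (2 * θ))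
    (hc : c = min θ s) :
    ∀ u : ℝ,
      -lam * c - Real.log (∫ v, Real.exp (-lam * (u - v) ^ 2)
          ∂(gaussianReal 0 ν.toNNReal)) =
        (min θ s / (2 * θ)) * (u ^ 2 / s - 1) + max 0 ((1 / 2) * Real.log (s / θ)) := by
  intro u
  subst hν hlam hc
  have hk : 1 + 2 * (1 / (2 * θ)) * ((max 0 (s - θ)).toNNReal : ℝ) = max θ s / θ := by
    rw [coe_toNNReal _ (le_max_left _ _), ← sub_self θ, max_sub_sub_right]
    field_simp
    ring
  have hmax : 0 < max θ s := lt_max_of_lt_left hθ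
  rw [integral_exp_neg_mul_sub_sq_gaussianReal _ _ (by rw [hk]; positivity), hk,
    log_mul (by positivity) (exp_pos _).ne', log_inv, log_sqrt (by positivity), log_exp,
    max_zero_half_log_div hs hθ]
  field_simp
  linear_combination (-u ^ 2) * min_mul_max θ s
end

section
/- Fix a ∈ [0,1), σ > 0, and n ≥ 1. Let A be the n×n lower bidiagonal matrix with A_{ii} = 1 for all i, A_{i+1,i} = −a for 1 ≤ i ≤ n−1, and all other entries 0, and let Σ_n = σ² (Aᵀ A)^{−1}, which is the covariance matrix of (X_1,…,X_n) for the Gauss–Markov source X_0 = 0, X_{i+1} = a X_i + Z_i with Z_i i.i.d. N(0, σ²). Then every eigenvalue t of Σ_n satisfies σ²/(1+a)² ≤ t ≤ σ²/(1−a)². (Lemma 10 of the paper.) -/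
open Matrix

/-- The lower bidiagonal matrix `A` of the Gauss–Markov recursion: `1` on the
diagonal, `−a` on the subdiagonal. -/
noncomputable def gmA (a : ℝ) (n : ℕ) : Matrix (Fin n) (Fin n) ℝ :=
  Matrix.of fun i j =>
    if (i : ℕ) = (j : ℕ) then 1 else if (i : ℕ) = (j : ℕ) + 1 then -a else 0

/-- The `n`-letter covariance matrix `Σ_n = σ²(AᵀA)⁻¹` of the Gauss–Markov source. -/
noncomputable def gmCov (a σ : ℝ) (n : ℕ) : Matrix (Fin n) (Fin n) ℝ :=
  σ ^ 2 • ((gmA a n)ᵀ * gmA a n)⁻¹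

lemma gmA_det (a : ℝ) (n : ℕ) : (gmA a n).det = 1 := by
  rw [Matrix.det_of_lowerTriangular (gmA a n) ?_]
  · simp [gmA]
  · intro i j h
    have hij : (i : Fin n) < j := h
    have hij' : (i : ℕ) < (j : ℕ) := hij
    simp only [gmA, Matrix.of_apply]
    rw [if_neg (by omega), if_neg (by omega)]

set_option maxHeartbeats 1000000 in
/-- Lemma 10: every eigenvalue `t` of the Gauss–Markov covariance matrix
`Σ_n = σ²(AᵀA)⁻¹` satisfies `σ²/(1+a)² ≤ t ≤ σ²/(1−a)²`. -/
theorem gauss_markov_eigenvalue_bounds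
    (a σ : ℝ) (ha : 0 ≤ a) (ha1 : a < 1) (hσ : 0 < σ)
    (n : ℕ) (hn : 1 ≤ n) :
    ∀ t ∈ spectrum ℝ (gmCov a σ n),
      σ ^ 2 / (1 + a) ^ 2 ≤ t ∧ t ≤ σ ^ 2 / (1 - a) ^ 2 := by
  intro t ht
  set M : Matrix (Fin n) (Fin n) ℝ := (gmA a n)ᵀ * gmA a n with hM
  have hdet : M.det = 1 := by
    rw [hM, Matrix.det_mul, Matrix.det_transpose, gmA_det]; ring
  have hMunit : IsUnit M.det := by rw [hdet]; exact isUnit_one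
  -- extract an eigenvector
  rw [spectrum.mem_iff, Algebra.algebraMap_eq_smul_one] at ht
  have hdet0 : (t • (1 : Matrix (Fin n) (Fin n) ℝ) - gmCov a σ n).det = 0 := by
    by_contra h
    exact ht ((Matrix.isUnit_iff_isUnit_det _).2 (isUnit_iff_ne_zero.2 h))
  obtain ⟨v, hv0, hv⟩ := Matrix.exists_mulVec_eq_zero_iff.2 hdet0
  have hveq : gmCov a σ n *ᵥ v = t • v := by
    rw [Matrix.sub_mulVec, sub_eq_zero] at hv
    rw [← hv, Matrix.smul_mulVec, Matrix.one_mulVec]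
  have hMMinv : M * M⁻¹ = 1 := Matrix.mul_nonsing_inv M hMunit
  have key : σ ^ 2 • v = t • (M *ᵥ v) := by
    have h1 : σ ^ 2 • (M⁻¹ *ᵥ v) = t • v := by
      rw [← Matrix.smul_mulVec]
      exact hveq
    calc σ ^ 2 • v = σ ^ 2 • ((M * M⁻¹) *ᵥ v) := by rw [hMMinv, Matrix.one_mulVec]
      _ = M *ᵥ (σ ^ 2 • (M⁻¹ *ᵥ v)) := by
          rw [← Matrix.mulVec_mulVec, Matrix.mulVec_smul]
      _ = M *ᵥ (t • v) := by rw [h1]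
      _ = t • (M *ᵥ v) := Matrix.mulVec_smul _ _ _
  have hσ2 : (0:ℝ) < σ ^ 2 := by positivity
  have ht0 : t ≠ 0 := by
    intro h
    rw [h, zero_smul, smul_eq_zero] at key
    rcases key with h' | h'
    · exact absurd h' (ne_of_gt hσ2)
    · exact hv0 h'
  set μ : ℝ := σ ^ 2 / t with hμ
  have hMv : M *ᵥ v = μ • v := by
    apply smul_right_injective (Fin n → ℝ) ht0
    show t • (M *ᵥ v) = t • (μ • v)
    rw [← key, smul_smul, hμ, mul_comm, div_mul_cancel₀ _ ht0]
  -- the shifted coordinates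
  set w : ℕ → ℝ := fun k => if h : 0 < k ∧ k ≤ n then v ⟨k - 1, by omega⟩ else 0 with hw
  have hw0 : w 0 = 0 := by simp [hw]
  have hwv : ∀ i : Fin n, w ((i : ℕ) + 1) = v i := by
    intro i
    have h : 0 < (i : ℕ) + 1 ∧ (i : ℕ) + 1 ≤ n := ⟨Nat.succ_pos _, i.isLt⟩
    simp only [hw]
    rw [dif_pos h]
    congr 1
  have hAv : ∀ i : Fin n, (gmA a n *ᵥ v) i = w ((i : ℕ) + 1) - a * w (i : ℕ) := by
    intro i
    rw [Matrix.mulVec, dotProduct]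
    have hsplit : ∀ j : Fin n,
        gmA a n i j * v j
          = (if j = i then v j else 0) + (if (i : ℕ) = (j : ℕ) + 1 then (-a) * v j else 0) := by
      intro j
      simp only [gmA, Matrix.of_apply]
      rcases eq_or_ne ((i : ℕ)) ((j : ℕ)) with h | h
      · have hj : j = i := Fin.ext h.symm
        rw [if_pos h, if_pos hj, if_neg (by omega), one_mul, add_zero]
      · have hj : j ≠ i := fun e => h (by rw [e])
        rw [if_neg h, if_neg hj, zero_add]
        by_cases h2 : (i : ℕ) = (j : ℕ) + 1
        · rw [if_pos h2, if_pos h2]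
        · rw [if_neg h2, if_neg h2, zero_mul]
    rw [Finset.sum_congr rfl (fun j _ => hsplit j), Finset.sum_add_distrib,
      Finset.sum_ite_eq' Finset.univ i v]
    simp only [Finset.mem_univ, if_true]
    have h2 : (∑ j : Fin n, if (i : ℕ) = (j : ℕ) + 1 then (-a) * v j else 0)
        = -(a * w (i : ℕ)) := by
      rcases Nat.eq_zero_or_pos (i : ℕ) with h0 | hpos
      · rw [h0, hw0, Finset.sum_eq_zero]
        · ring
        · intro j _; rw [if_neg (by omega)]
      · set k : Fin n := ⟨(i : ℕ) - 1, by omega⟩ with hk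
        have hik : (i : ℕ) = (k : ℕ) + 1 := by simp only [hk]; omega
        have hsum : ∀ j : Fin n, (if (i : ℕ) = (j : ℕ) + 1 then (-a) * v j else 0)
            = if j = k then (-a) * v j else 0 := by
          intro j
          by_cases h : j = k
          · rw [if_pos (by rw [h, hik]), if_pos h]
          · rw [if_neg ?_, if_neg h]
            intro e
            exact h (Fin.ext (by omega))
        rw [Finset.sum_congr rfl (fun j _ => hsum j), Finset.sum_ite_eq' Finset.univ k]
        simp only [Finset.mem_univ, if_true]
        rw [hik, hwv k]
        ring
    rw [h2, hwv i]
    ring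
  -- the three sums
  set S : ℝ := ∑ k ∈ Finset.range n, w (k + 1) ^ 2 with hS
  set T : ℝ := ∑ k ∈ Finset.range n, w k ^ 2 with hT
  set P : ℝ := ∑ k ∈ Finset.range n, w (k + 1) * w k with hP
  have hdotv : v ⬝ᵥ v = S := by
    rw [dotProduct, hS]
    calc ∑ i : Fin n, v i * v i
        = ∑ i : Fin n, (fun k : ℕ => w (k + 1) ^ 2) (i : ℕ) := by
          refine Finset.sum_congr rfl fun i _ => ?_
          show v i * v i = w ((i : ℕ) + 1) ^ 2
          rw [hwv i]; ring
      _ = _ := Fin.sum_univ_eq_sum_range (fun k : ℕ => w (k + 1) ^ 2) n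
  have hdotAv : (gmA a n *ᵥ v) ⬝ᵥ (gmA a n *ᵥ v)
      = ∑ k ∈ Finset.range n, (w (k + 1) - a * w k) ^ 2 := by
    rw [dotProduct]
    calc ∑ i : Fin n, (gmA a n *ᵥ v) i * (gmA a n *ᵥ v) i
        = ∑ i : Fin n, (fun k : ℕ => (w (k + 1) - a * w k) ^ 2) (i : ℕ) := by
          refine Finset.sum_congr rfl fun i _ => ?_
          show (gmA a n *ᵥ v) i * (gmA a n *ᵥ v) i = (w ((i : ℕ) + 1) - a * w (i : ℕ)) ^ 2
          rw [hAv i]; ring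
      _ = _ := Fin.sum_univ_eq_sum_range (fun k : ℕ => (w (k + 1) - a * w k) ^ 2) n
  have hform : (gmA a n *ᵥ v) ⬝ᵥ (gmA a n *ᵥ v) = μ * (v ⬝ᵥ v) := by
    have h1 : v ⬝ᵥ (M *ᵥ v) = μ * (v ⬝ᵥ v) := by
      rw [hMv, dotProduct_smul, smul_eq_mul]
    have h2 : v ⬝ᵥ (M *ᵥ v) = (gmA a n *ᵥ v) ⬝ᵥ (gmA a n *ᵥ v) := by
      rw [hM, ← Matrix.mulVec_mulVec, Matrix.dotProduct_mulVec, Matrix.vecMul_transpose]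
    rw [← h2, h1]
  have hexp : μ * S = S - 2 * a * P + a ^ 2 * T := by
    have h1 : μ * S = ∑ k ∈ Finset.range n, (w (k + 1) - a * w k) ^ 2 := by
      rw [← hdotAv, hform, hdotv]
    rw [h1]
    have h2 : ∀ k ∈ Finset.range n, (w (k + 1) - a * w k) ^ 2
        = w (k + 1) ^ 2 - 2 * a * (w (k + 1) * w k) + a ^ 2 * w k ^ 2 := by
      intro k _; ring
    rw [Finset.sum_congr rfl h2]
    simp only [Finset.sum_add_distrib, Finset.sum_sub_distrib, ← Finset.mul_sum,
      hS, hT, hP]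
  have hSpos : 0 < S := by
    rw [← hdotv, dotProduct]
    obtain ⟨i, hi⟩ := Function.ne_iff.mp hv0
    exact Finset.sum_pos' (fun j _ => mul_self_nonneg _)
      ⟨i, Finset.mem_univ i, mul_self_pos.2 hi⟩
  have hT0 : 0 ≤ T := Finset.sum_nonneg fun k _ => sq_nonneg _
  have hTS : T ≤ S := by
    have hsum1 : ∑ k ∈ Finset.range (n + 1), w k ^ 2 = S + w 0 ^ 2 := by
      rw [Finset.sum_range_succ' (fun k => w k ^ 2) n, hS]
    have hsum2 : ∑ k ∈ Finset.range (n + 1), w k ^ 2 = T + w n ^ 2 := by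
      rw [Finset.sum_range_succ (fun k => w k ^ 2) n, hT]
    nlinarith [sq_nonneg (w n), sq_nonneg (w 0), hw0]
  have hCS : P ^ 2 ≤ S * T :=
    Finset.sum_mul_sq_le_sq_mul_sq (Finset.range n) (fun k => w (k + 1)) (fun k => w k)
  have h2P : 2 * P ≤ S + T := by nlinarith [sq_nonneg (S - T)]
  have h2P' : -(S + T) ≤ 2 * P := by nlinarith [sq_nonneg (S - T)]
  have hμlow : (1 - a) ^ 2 ≤ μ := by
    have h1 : (1 - a) ^ 2 * S ≤ μ * S := by
      rw [hexp]
      nlinarith [mul_nonneg ha (by linarith : (0:ℝ) ≤ S + T - 2 * P),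
        mul_nonneg (mul_nonneg ha (by linarith : (0:ℝ) ≤ 1 - a))
          (by linarith : (0:ℝ) ≤ S - T)]
    exact le_of_mul_le_mul_right h1 hSpos
  have hμhigh : μ ≤ (1 + a) ^ 2 := by
    have h1 : μ * S ≤ (1 + a) ^ 2 * S := by
      rw [hexp]
      nlinarith [mul_nonneg ha (by linarith : (0:ℝ) ≤ S + T + 2 * P),
        mul_nonneg ha (by linarith : (0:ℝ) ≤ S - T),
        mul_nonneg (mul_nonneg ha ha) (by linarith : (0:ℝ) ≤ S - T)]
    exact le_of_mul_le_mul_right h1 hSpos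
  -- translate the bounds on μ = σ²/t to bounds on t
  have h1a : (0:ℝ) < (1 - a) ^ 2 := pow_pos (by linarith) 2
  have h1a' : (0:ℝ) < (1 + a) ^ 2 := by positivity
  have htpos : 0 < t := by
    rcases lt_trichotomy t 0 with h | h | h
    · exfalso
      have : μ < 0 := div_neg_of_pos_of_neg hσ2 h
      nlinarith
    · exact absurd h ht0
    · exact h
  have hμt : μ * t = σ ^ 2 := by
    rw [hμ, div_mul_cancel₀ _ ht0]
  constructor
  · rw [div_le_iff₀ h1a']
    nlinarith
  · rw [le_div_iff₀ h1a]
    nlinarith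
end

section
/- Fix a ∈ (0,1) and σ > 0, let S(ω) = σ²/(1 + a² − 2a cos ω) for ω ∈ [−π,π], θ_max = σ²/(1−a)², and define g(θ) = (1/2π) ∫_{−π}^{π} min(θ, S(ω)) dω. Then g is differentiable at every θ ∈ (0, θ_max) with g'(θ) = (1/2π) · Leb( { ω ∈ [−π, π] : S(ω) > θ } ), and g'(θ) > 0 for all θ ∈ (0, θ_max). (This is the differentiation step in the proof of the paper's Lemma 9, used to invert the limiting reverse water-filling equation.) -/
/-!
Since `t ↦ min t x` is `1`-Lipschitz with derivative `1_{θ < x}` at every `θ ≠ x`, dominated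
differentiation under the integral gives `Leb {S > θ}` as the derivative of `θ ↦ ∫ min θ S`
whenever the level set `{S = θ}` is null. For the Gauss–Markov spectrum that level set lies in
`{ω | cos ω = c}`, which meets `[-π, π]` only at `± arccos c`. Positivity holds because
`S 0 = θ_max > θ`, so `{S > θ}` is a neighbourhood of `0`.
-/

open MeasureTheory Set Filter Real

theorem hasDerivAt_min_const {x θ : ℝ} (h : x ≠ θ) :
    HasDerivAt (fun t => min t x) (if θ < x then 1 else 0) θ := by
  rcases h.lt_or_gt with hx | hx
  · rw [if_neg (not_lt.2 hx.le)]
    refine (hasDerivAt_const θ x).congr_of_eventuallyEq ?_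
    filter_upwards [Ioi_mem_nhds hx] with t ht using min_eq_right ht.le
  · rw [if_pos hx]
    refine (hasDerivAt_id θ).congr_of_eventuallyEq ?_
    filter_upwards [Iio_mem_nhds hx] with t ht using min_eq_left ht.le

theorem hasDerivAt_integral_min {α : Type*} [MeasurableSpace α] {μ : Measure α}
    [IsFiniteMeasure μ] {f : α → ℝ} (hf : Integrable f μ) {θ : ℝ}
    (hθ : μ {ω | f ω = θ} = 0) :
    HasDerivAt (fun t => ∫ ω, min t (f ω) ∂μ) (μ.real {ω | θ < f ω}) θ := by
  have hmeas : NullMeasurableSet {ω | θ < f ω} μ :=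
    nullMeasurableSet_lt aemeasurable_const hf.aemeasurable
  have hint (t : ℝ) : Integrable (fun ω => min t (f ω)) μ := (integrable_const t).inf hf
  have hne : ∀ᵐ ω ∂μ, f ω ≠ θ := measure_mono_null (fun ω hω => not_not.1 hω) hθ
  have hderiv := hasDerivAt_integral_of_dominated_loc_of_lip (F' := {ω | θ < f ω}.indicator 1)
    (bound := fun _ => 1) univ_mem
    (.of_forall fun t => (hint t).aestronglyMeasurable) (hint θ)
    ((aestronglyMeasurable_indicator_iff₀ hmeas).2 aestronglyMeasurable_const)
    (.of_forall fun ω => by simpa using LipschitzWith.id.min_const (f ω))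
    (integrable_const 1)
    (hne.mono fun ω hω => by simpa [indicator_apply] using hasDerivAt_min_const hω)
  rw [integral_indicator₀ hmeas, Pi.one_def, setIntegral_const, smul_eq_mul, mul_one] at hderiv
  exact hderiv.2

theorem hasDerivAt_intervalIntegral_min {f : ℝ → ℝ} {a b θ : ℝ} (hab : a ≤ b)
    (hf : IntervalIntegrable f volume a b) (hθ : volume {ω ∈ Icc a b | f ω = θ} = 0) :
    HasDerivAt (fun t => ∫ ω in a..b, min t (f ω))
      (volume {ω ∈ Icc a b | θ < f ω}).toReal θ := by
  have hIoc (p : ℝ → Prop) :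
      volume.restrict (Ioc a b) {ω | p ω} = volume {ω ∈ Icc a b | p ω} := by
    rw [Measure.restrict_apply' measurableSet_Ioc, inter_comm]
    exact measure_congr (Ioc_ae_eq_Icc.inter (ae_eq_refl _))
  have hderiv := hasDerivAt_integral_min hf.1 ((hIoc _).trans hθ)
  simp_rw [intervalIntegral.integral_of_le hab]
  rwa [measureReal_def, hIoc] at hderiv

theorem Real.eq_arccos_or_eq_neg_arccos {ω c : ℝ} (hω : ω ∈ Icc (-π) π) (hc : cos ω = c) :
    ω = arccos c ∨ ω = -arccos c := by
  subst hc
  rcases le_total 0 ω with h0 | h0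
  · exact .inl (arccos_cos h0 hω.2).symm
  · refine .inr ?_
    rw [← cos_neg, arccos_cos (by linarith) (by linarith [hω.1]), neg_neg]

theorem volume_setOf_cos_eq (c : ℝ) : volume {ω ∈ Icc (-π) π | cos ω = c} = 0 :=
  measure_mono_null (fun _ hω => Real.eq_arccos_or_eq_neg_arccos hω.1 hω.2)
    ((toFinite {arccos c, -arccos c}).measure_zero _)

theorem toReal_volume_setOf_lt_pos {f : ℝ → ℝ} {a b x θ : ℝ} (hx : x ∈ Ioo a b)
    (hf : ContinuousAt f x) (hθ : θ < f x) : 0 < (volume {ω ∈ Icc a b | θ < f ω}).toReal := by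
  have hnhds : {ω ∈ Icc a b | θ < f ω} ∈ nhds x :=
    mem_of_superset (inter_mem (Ioo_mem_nhds hx.1 hx.2) (hf.eventually (lt_mem_nhds hθ)))
      fun ω h => ⟨Ioo_subset_Icc_self h.1, h.2⟩
  exact ENNReal.toReal_pos (Measure.measure_pos_of_mem_nhds _ hnhds).ne'
    ((measure_mono (sep_subset _ _)).trans_lt measure_Icc_lt_top).ne

theorem one_add_sq_sub_two_mul_cos_pos {a : ℝ} (ha : |a| < 1) (ω : ℝ) :
    0 < 1 + a ^ 2 - 2 * a * cos ω := by
  have hcos : a * cos ω ≤ |a| :=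
    calc a * cos ω ≤ |a| * |cos ω| := (le_abs_self _).trans (abs_mul a _).le
      _ ≤ |a| := mul_le_of_le_one_right (abs_nonneg a) (abs_cos_le_one ω)
  nlinarith [sq_abs a, sq_pos_of_pos (sub_pos.2 ha)]

noncomputable def gaussMarkovPSD (a σ ω : ℝ) : ℝ := σ ^ 2 / (1 + a ^ 2 - 2 * a * cos ω)

theorem continuous_gaussMarkovPSD {a : ℝ} (ha : |a| < 1) (σ : ℝ) :
    Continuous (gaussMarkovPSD a σ) :=
  continuous_const.div (by fun_prop) fun ω => (one_add_sq_sub_two_mul_cos_pos ha ω).ne'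

theorem gaussMarkovPSD_zero (a σ : ℝ) : gaussMarkovPSD a σ 0 = σ ^ 2 / (1 - a) ^ 2 := by
  rw [gaussMarkovPSD, cos_zero]
  ring

theorem volume_setOf_gaussMarkovPSD_eq {a : ℝ} (ha : |a| < 1) (ha0 : a ≠ 0) (σ : ℝ) {θ : ℝ}
    (hθ : θ ≠ 0) : volume {ω ∈ Icc (-π) π | gaussMarkovPSD a σ ω = θ} = 0 := by
  refine measure_mono_null ?_ (volume_setOf_cos_eq ((1 + a ^ 2 - σ ^ 2 / θ) / (2 * a)))
  rintro ω ⟨hω, hS⟩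
  refine ⟨hω, ?_⟩
  rw [gaussMarkovPSD, div_eq_iff (one_add_sq_sub_two_mul_cos_pos ha ω).ne'] at hS
  field_simp
  linear_combination hS

theorem water_filling_derivative_general
    (a σ : ℝ) (ha : 0 < a) (ha1 : a < 1)
    (θmax : ℝ) (hθmax : θmax = σ ^ 2 / (1 - a) ^ 2)
    (S : ℝ → ℝ) (hS : ∀ ω, S ω = σ ^ 2 / (1 + a ^ 2 - 2 * a * Real.cos ω))
    (g : ℝ → ℝ)
    (hg : ∀ θ, g θ = (1 / (2 * Real.pi)) * ∫ ω in (-Real.pi)..Real.pi, min θ (S ω)) :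
    ∀ θ ∈ Set.Ioo 0 θmax,
      HasDerivAt g
        ((1 / (2 * Real.pi)) *
          (volume {ω ∈ Set.Icc (-Real.pi) Real.pi | θ < S ω}).toReal) θ ∧
      0 < (1 / (2 * Real.pi)) *
          (volume {ω ∈ Set.Icc (-Real.pi) Real.pi | θ < S ω}).toReal := by
  rintro θ ⟨hθ0, hθmax_lt⟩
  obtain rfl : S = gaussMarkovPSD a σ := funext hS
  obtain rfl : g = fun t => (1 / (2 * π)) * ∫ ω in (-π)..π, min t (gaussMarkovPSD a σ ω) :=
    funext hg
  have ha_abs : |a| < 1 := abs_lt.2 ⟨by linarith, ha1⟩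
  have hcont := continuous_gaussMarkovPSD ha_abs σ
  have hderiv := hasDerivAt_intervalIntegral_min (by linarith [pi_pos])
    (hcont.intervalIntegrable _ _) (volume_setOf_gaussMarkovPSD_eq ha_abs ha.ne' σ hθ0.ne')
  have hpos := toReal_volume_setOf_lt_pos (θ := θ) ⟨neg_lt_zero.2 pi_pos, pi_pos⟩
    hcont.continuousAt (by rwa [gaussMarkovPSD_zero, ← hθmax])
  exact ⟨hderiv.const_mul _, by positivity⟩

/-- Differentiation step in the proof of Lemma 9: the limiting reverse water-filling
distortion `g(θ) = (1/2π)∫ min(θ, S(ω)) dω` is differentiable on `(0, θ_max)` with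
`g'(θ) = (1/2π)·Leb{ω ∈ [−π,π] : S(ω) > θ} > 0`. -/
theorem water_filling_derivative
    (a σ : ℝ) (ha : 0 < a) (ha1 : a < 1) (hσ : 0 < σ)
    (θmax : ℝ) (hθmax : θmax = σ ^ 2 / (1 - a) ^ 2)
    (S : ℝ → ℝ) (hS : ∀ ω, S ω = σ ^ 2 / (1 + a ^ 2 - 2 * a * Real.cos ω))
    (g : ℝ → ℝ)
    (hg : ∀ θ, g θ = (1 / (2 * Real.pi)) * ∫ ω in (-Real.pi)..Real.pi, min θ (S ω)) :
    ∀ θ ∈ Set.Ioo 0 θmax,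
      HasDerivAt g
        ((1 / (2 * Real.pi)) *
          (volume {ω ∈ Set.Icc (-Real.pi) Real.pi | θ < S ω}).toReal) θ ∧
      0 < (1 / (2 * Real.pi)) *
          (volume {ω ∈ Set.Icc (-Real.pi) Real.pi | θ < S ω}).toReal :=
  water_filling_derivative_general a σ ha ha1 θmax hθmax S hS g hg
end
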